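/- Let X and Y be independent nonnegative real random variables such that X has the Fisher-Snedecor F density with parameters (m₁, m_{s1}, Ω₁) and Y has the Fisher-Snedecor F density with parameters (m₂, m_{s2}, Ω₂), where m₁, m₂ > 0, m_{s1}, m_{s2} > 1 and Ω₁, Ω₂ > 0. Then the variance of W = √X · √Y equals Var(W) = [(m_{s1}−1)(m_{s2}−1)·Ω₁·Ω₂ / (m₁·m₂·B(m₁,m_{s1})·B(m₂,m_{s2}))] · [ B(m₁+1, m_{s1}−1)·B(m₂+1, m_{s2}−1) − B(m₁+1/2, m_{s1}−1/2)²·B(m₂+1/2, m_{s2}−1/2)² / (B(m₁,m_{s1})·B(m₂,m_{s2})) ]. (Variance of the per-element cascaded channel amplitude W_n, Appendix A; stated here with the corrected sign so that Var(W) = E[X]E[Y] − (E[√X]E[√Y])² ≥ 0.) -/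

import Mathlib

/-!
Under the Fisher-Snedecor law, the substitution `y = m x / ((m_s - 1) Ω)` turns the moment
`E[X^p]` into the beta-prime integral `∫₀^∞ y^(a-1) (1 + y)^(-(a+b)) dy = B(a, b)` with
`a = m + p`, `b = m_s - p`; that integral is the Beta integral on `(0, 1)` after `u ↦ u / (1 - u)`.
Hence `E[X^p] = ((m_s - 1) Ω / m)^p B(m + p, m_s - p) / B(m, m_s)` for `-m < p < m_s`.
Since `√X` and `√Y` are independent, `Var(√X √Y) = E[X] E[Y] - (E[√X] E[√Y])²`, and the cases
`p = 1` and `p = 1/2` give the formula.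
-/

open MeasureTheory ProbabilityTheory Real Set

/-- Euler Beta function B(p,q) = Γ(p)Γ(q)/Γ(p+q). -/
noncomputable def eulerBeta (p q : ℝ) : ℝ := Real.Gamma p * Real.Gamma q / Real.Gamma (p + q)

/-- The Fisher-Snedecor F density with fading parameter m, shadowing parameter m_s
and mean power Ω. -/
noncomputable def fisherF (m ms Ω x : ℝ) : ℝ :=
  m ^ m * ((ms - 1) * Ω) ^ ms * x ^ (m - 1) /
    (eulerBeta m ms * (m * x + (ms - 1) * Ω) ^ (m + ms))

lemma eulerBeta_pos {p q : ℝ} (hp : 0 < p) (hq : 0 < q) : 0 < eulerBeta p q :=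
  beta_pos hp hq

lemma Complex.betaIntegral_ofReal (a b : ℝ) :
    Complex.betaIntegral a b =
      ((∫ x in (0:ℝ)..1, x ^ (a - 1) * (1 - x) ^ (b - 1) : ℝ) : ℂ) := by
  rw [Complex.betaIntegral, ← intervalIntegral.integral_ofReal]
  refine intervalIntegral.integral_congr fun x hx => ?_
  rw [uIcc_of_le zero_le_one] at hx
  push_cast
  rw [Complex.ofReal_cpow hx.1, Complex.ofReal_cpow (sub_nonneg.2 hx.2)]
  push_cast
  rfl

lemma integral_rpow_mul_one_sub_rpow {a b : ℝ} (ha : 0 < a) (hb : 0 < b) :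
    ∫ x in (0:ℝ)..1, x ^ (a - 1) * (1 - x) ^ (b - 1) = eulerBeta a b := by
  have h := beta_eq_betaIntegralReal a b ha hb
  rw [Complex.betaIntegral_ofReal, Complex.ofReal_re] at h
  exact h.symm

lemma integrableOn_rpow_mul_one_sub_rpow {a b : ℝ} (ha : 0 < a) (hb : 0 < b) :
    IntegrableOn (fun x : ℝ => x ^ (a - 1) * (1 - x) ^ (b - 1)) (Ioo 0 1) := by
  have h : IntegrableOn _ (Ioc (0:ℝ) 1) :=
    (Complex.betaIntegral_convergent (u := a) (v := b) (by simpa) (by simpa)).1.norm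
  refine (h.mono_set Ioo_subset_Ioc_self).congr_fun (fun x hx => ?_) measurableSet_Ioo
  have hx1 : (1 - x : ℂ) = ((1 - x : ℝ) : ℂ) := by push_cast; rfl
  simp only [norm_mul]
  rw [hx1, Complex.norm_cpow_eq_rpow_re_of_pos hx.1,
    Complex.norm_cpow_eq_rpow_re_of_pos (sub_pos.2 hx.2)]
  simp

lemma image_div_one_sub_Ioo : (fun u : ℝ => u / (1 - u)) '' Ioo 0 1 = Ioi 0 := by
  ext y
  constructor
  · rintro ⟨u, ⟨hu0, hu1⟩, rfl⟩
    exact div_pos hu0 (sub_pos.2 hu1)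
  · intro (hy : 0 < y)
    refine ⟨y / (1 + y), ⟨by positivity, (div_lt_one (by positivity)).2 (by linarith)⟩, ?_⟩
    field_simp
    ring

lemma injOn_div_one_sub_Ioo : InjOn (fun u : ℝ => u / (1 - u)) (Ioo 0 1) := by
  intro u ⟨_, hu⟩ v ⟨_, hv⟩ huv
  have := sub_pos.2 hu
  have := sub_pos.2 hv
  field_simp at huv
  linarith

lemma hasDerivAt_div_one_sub {u : ℝ} (hu : u ≠ 1) :
    HasDerivAt (fun u : ℝ => u / (1 - u)) ((1 - u) ^ 2)⁻¹ u := by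
  have hu' : 1 - u ≠ 0 := sub_ne_zero.2 hu.symm
  refine ((hasDerivAt_id' u).div ((hasDerivAt_id' u).const_sub 1) hu').congr_deriv ?_
  field_simp
  ring

noncomputable def betaPrimeKernel (a b y : ℝ) : ℝ := y ^ (a - 1) * (1 + y) ^ (-(a + b))

lemma abs_deriv_smul_betaPrimeKernel_div_one_sub {a b u : ℝ} (hu : u ∈ Ioo 0 1) :
    |((1 - u) ^ 2)⁻¹| • betaPrimeKernel a b (u / (1 - u)) = u ^ (a - 1) * (1 - u) ^ (b - 1) := by
  have hv : 0 < 1 - u := sub_pos.2 hu.2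
  have h1 : 1 + u / (1 - u) = (1 - u)⁻¹ := by field_simp; ring
  have h2 : (1 - u) ^ (a + b) = (1 - u) ^ (a - 1) * (1 - u) ^ (b - 1) * (1 - u) ^ 2 := by
    rw [← rpow_natCast, ← rpow_add hv, ← rpow_add hv]
    congr 1
    push_cast
    ring
  rw [betaPrimeKernel, h1, div_rpow hu.1.le hv.le, inv_rpow hv.le, rpow_neg (by positivity),
    inv_inv, h2, abs_of_pos (by positivity), smul_eq_mul]
  have := rpow_pos_of_pos hv (a - 1)
  field_simp

lemma integrableOn_betaPrimeKernel {a b : ℝ} (ha : 0 < a) (hb : 0 < b) :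
    IntegrableOn (betaPrimeKernel a b) (Ioi 0) := by
  rw [← image_div_one_sub_Ioo, integrableOn_image_iff_integrableOn_abs_deriv_smul
    measurableSet_Ioo (fun u hu => (hasDerivAt_div_one_sub hu.2.ne).hasDerivWithinAt)
    injOn_div_one_sub_Ioo]
  exact (integrableOn_rpow_mul_one_sub_rpow ha hb).congr_fun
    (fun u hu => (abs_deriv_smul_betaPrimeKernel_div_one_sub hu).symm) measurableSet_Ioo

lemma integral_betaPrimeKernel {a b : ℝ} (ha : 0 < a) (hb : 0 < b) :
    ∫ x in Ioi 0, betaPrimeKernel a b x = eulerBeta a b := by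
  rw [← image_div_one_sub_Ioo, integral_image_eq_integral_abs_deriv_smul
    measurableSet_Ioo (fun u hu => (hasDerivAt_div_one_sub hu.2.ne).hasDerivWithinAt)
    injOn_div_one_sub_Ioo, setIntegral_congr_fun measurableSet_Ioo
    (fun u hu => abs_deriv_smul_betaPrimeKernel_div_one_sub hu),
    ← integral_rpow_mul_one_sub_rpow ha hb, intervalIntegral.integral_of_le zero_le_one,
    integral_Ioc_eq_integral_Ioo]

section Moments

variable {m ms Ω : ℝ}

lemma rpow_mul_fisherF {p x : ℝ} (hm : 0 < m) (hms : 1 < ms) (hΩ : 0 < Ω) (hx : 0 < x) :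
    x ^ p * fisherF m ms Ω x =
      (m / ((ms - 1) * Ω)) ^ (-p) / eulerBeta m ms * (m / ((ms - 1) * Ω) *
        betaPrimeKernel (m + p) (ms - p) (m / ((ms - 1) * Ω) * x)) := by
  set d := (ms - 1) * Ω
  have hd : 0 < d := mul_pos (sub_pos.2 hms) hΩ
  set k := m / d
  have hk : 0 < k := div_pos hm hd
  have hk_pow : k ^ (-p) * k * k ^ (m + p - 1) = m ^ m / d ^ m := by
    rw [← rpow_add_one hk.ne', ← rpow_add hk, div_rpow hm.le hd.le]
    ring_nf
  have hx_pow : x ^ (m + p - 1) = x ^ p * x ^ (m - 1) := by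
    rw [← rpow_add hx]
    ring_nf
  have h_one_add : (1 + k * x) ^ (-(m + ms)) = d ^ m * d ^ ms / (m * x + d) ^ (m + ms) := by
    rw [show 1 + k * x = (m * x + d) / d by simp only [k]; field_simp; ring,
      rpow_neg (by positivity), div_rpow (by positivity) hd.le, inv_div, rpow_add hd]
  rw [fisherF, betaPrimeKernel, show m + p + (ms - p) = m + ms by ring, mul_rpow hk.le hx.le,
    h_one_add, hx_pow]
  calc x ^ p * (m ^ m * d ^ ms * x ^ (m - 1) / (eulerBeta m ms * (m * x + d) ^ (m + ms)))
      = m ^ m / d ^ m / eulerBeta m ms *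
          (x ^ p * x ^ (m - 1) * (d ^ m * d ^ ms / (m * x + d) ^ (m + ms))) := by
        have := rpow_pos_of_pos hd m
        field_simp
    _ = _ := by rw [← hk_pow]; ring

lemma integrableOn_rpow_mul_fisherF {p : ℝ} (hm : 0 < m) (hms : 1 < ms) (hΩ : 0 < Ω)
    (hpm : -m < p) (hps : p < ms) :
    IntegrableOn (fun x => x ^ p * fisherF m ms Ω x) (Ioi 0) := by
  have hk : 0 < m / ((ms - 1) * Ω) := div_pos hm (mul_pos (sub_pos.2 hms) hΩ)
  have h := integrableOn_betaPrimeKernel (a := m + p) (b := ms - p) (by linarith) (by linarith)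
  rw [← mul_zero (m / ((ms - 1) * Ω)), ← integrableOn_Ioi_comp_mul_left_iff _ _ hk] at h
  exact IntegrableOn.congr_fun ((h.const_mul _).const_mul _)
    (fun x hx => (rpow_mul_fisherF hm hms hΩ hx).symm) measurableSet_Ioi

lemma integral_rpow_mul_fisherF {p : ℝ} (hm : 0 < m) (hms : 1 < ms) (hΩ : 0 < Ω)
    (hpm : -m < p) (hps : p < ms) :
    ∫ x in Ioi 0, x ^ p * fisherF m ms Ω x =
      ((ms - 1) * Ω / m) ^ p * eulerBeta (m + p) (ms - p) / eulerBeta m ms := by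
  have hk : 0 < m / ((ms - 1) * Ω) := div_pos hm (mul_pos (sub_pos.2 hms) hΩ)
  rw [setIntegral_congr_fun measurableSet_Ioi (fun x hx => rpow_mul_fisherF hm hms hΩ hx),
    integral_const_mul, integral_const_mul,
    integral_comp_mul_left_Ioi (betaPrimeKernel (m + p) (ms - p)) 0 hk, mul_zero,
    integral_betaPrimeKernel (by linarith) (by linarith), smul_eq_mul, rpow_neg hk.le,
    ← inv_rpow hk.le, inv_div]
  have := (sub_pos.2 hms).ne'
  field_simp

end Moments

noncomputable def fisherFMeasure (m ms Ω : ℝ) : Measure ℝ :=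
  (volume.restrict (Ioi 0)).withDensity fun x => ENNReal.ofReal (fisherF m ms Ω x)

section FisherFMeasure

variable {m ms Ω : ℝ}

lemma fisherF_nonneg (hm : 0 < m) (hms : 1 < ms) (hΩ : 0 < Ω) {x : ℝ} (hx : 0 < x) :
    0 ≤ fisherF m ms Ω x := by
  have := eulerBeta_pos hm (zero_lt_one.trans hms)
  have := sub_pos.2 hms
  unfold fisherF
  positivity

lemma ae_toReal_ofReal_fisherF_smul_eq (hm : 0 < m) (hms : 1 < ms) (hΩ : 0 < Ω) (g : ℝ → ℝ) :
    ∀ᵐ x ∂volume.restrict (Ioi 0),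
      (ENNReal.ofReal (fisherF m ms Ω x)).toReal • g x = g x * fisherF m ms Ω x := by
  filter_upwards [ae_restrict_mem measurableSet_Ioi] with x hx
  rw [ENNReal.toReal_ofReal (fisherF_nonneg hm hms hΩ hx), smul_eq_mul, mul_comm]

lemma integral_fisherFMeasure (hm : 0 < m) (hms : 1 < ms) (hΩ : 0 < Ω) (g : ℝ → ℝ) :
    ∫ x, g x ∂fisherFMeasure m ms Ω = ∫ x in Ioi 0, g x * fisherF m ms Ω x := by
  rw [fisherFMeasure, integral_withDensity_eq_integral_toReal_smul (by unfold fisherF; fun_prop)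
    (ae_of_all _ fun _ => ENNReal.ofReal_lt_top)]
  exact integral_congr_ae (ae_toReal_ofReal_fisherF_smul_eq hm hms hΩ g)

lemma integrable_fisherFMeasure_iff (hm : 0 < m) (hms : 1 < ms) (hΩ : 0 < Ω) (g : ℝ → ℝ) :
    Integrable g (fisherFMeasure m ms Ω) ↔
      IntegrableOn (fun x => g x * fisherF m ms Ω x) (Ioi 0) := by
  rw [fisherFMeasure, integrable_withDensity_iff_integrable_smul' (by unfold fisherF; fun_prop)
    (ae_of_all _ fun _ => ENNReal.ofReal_lt_top)]
  exact integrable_congr (ae_toReal_ofReal_fisherF_smul_eq hm hms hΩ g)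

lemma isProbabilityMeasure_fisherFMeasure (hm : 0 < m) (hms : 1 < ms) (hΩ : 0 < Ω) :
    IsProbabilityMeasure (fisherFMeasure m ms Ω) := by
  have h := integral_fisherFMeasure hm hms hΩ fun _ => 1
  have h_one := integral_rpow_mul_fisherF (p := 0) hm hms hΩ (by linarith) (by linarith)
  simp only [rpow_zero, add_zero, sub_zero, one_mul,
    div_self (eulerBeta_pos hm (zero_lt_one.trans hms)).ne'] at h_one
  simp only [integral_const, smul_eq_mul, mul_one, one_mul, h_one, measureReal_def,
    ENNReal.toReal_eq_one_iff] at h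
  exact ⟨h⟩

variable {α : Type*} {mα : MeasurableSpace α} {P : Measure α} {X : α → ℝ}
  {g : ℝ → ℝ} {p : ℝ}

lemma aemeasurable_of_map_eq_fisherFMeasure (hm : 0 < m) (hms : 1 < ms) (hΩ : 0 < Ω)
    (hX : P.map X = fisherFMeasure m ms Ω) : AEMeasurable X P :=
  have := isProbabilityMeasure_fisherFMeasure hm hms hΩ
  .of_map_ne_zero (hX ▸ IsProbabilityMeasure.ne_zero _)

lemma integrable_comp_of_map_eq_fisherFMeasure (hm : 0 < m) (hms : 1 < ms) (hΩ : 0 < Ω)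
    (hX : P.map X = fisherFMeasure m ms Ω) (hg : Measurable g) (hgp : EqOn g (· ^ p) (Ioi 0))
    (hpm : -m < p) (hps : p < ms) :
    Integrable (fun ω => g (X ω)) P := by
  rw [← Function.comp_def, ← integrable_map_measure hg.aestronglyMeasurable
    (aemeasurable_of_map_eq_fisherFMeasure hm hms hΩ hX), hX,
    integrable_fisherFMeasure_iff hm hms hΩ]
  exact (integrableOn_rpow_mul_fisherF hm hms hΩ hpm hps).congr_fun
    (fun x hx => by rw [hgp hx]) measurableSet_Ioi

lemma integral_comp_of_map_eq_fisherFMeasure (hm : 0 < m) (hms : 1 < ms) (hΩ : 0 < Ω)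
    (hX : P.map X = fisherFMeasure m ms Ω) (hg : Measurable g) (hgp : EqOn g (· ^ p) (Ioi 0))
    (hpm : -m < p) (hps : p < ms) :
    ∫ ω, g (X ω) ∂P = ((ms - 1) * Ω / m) ^ p * eulerBeta (m + p) (ms - p) / eulerBeta m ms := by
  rw [← integral_map (aemeasurable_of_map_eq_fisherFMeasure hm hms hΩ hX)
    hg.aestronglyMeasurable, hX, integral_fisherFMeasure hm hms hΩ,
    ← integral_rpow_mul_fisherF hm hms hΩ hpm hps]
  exact setIntegral_congr_fun measurableSet_Ioi fun x hx => by rw [hgp hx]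

lemma memLp_two_sqrt_comp_of_map_eq_fisherFMeasure (hm : 0 < m) (hms : 1 < ms) (hΩ : 0 < Ω)
    (hX : P.map X = fisherFMeasure m ms Ω) : MemLp (fun ω => √(X ω)) 2 P :=
  (memLp_two_iff_integrable_sq (integrable_comp_of_map_eq_fisherFMeasure hm hms hΩ hX
    continuous_sqrt.measurable (fun x _ => sqrt_eq_rpow x) (by linarith)
    (by linarith)).aestronglyMeasurable).2
    (integrable_comp_of_map_eq_fisherFMeasure (p := 1) hm hms hΩ hX
      (continuous_sqrt.measurable.pow_const 2) (fun x hx => by simp [sq_sqrt (le_of_lt hx)]) (by linarith) hms)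

lemma integral_sqrt_comp_of_map_eq_fisherFMeasure (hm : 0 < m) (hms : 1 < ms) (hΩ : 0 < Ω)
    (hX : P.map X = fisherFMeasure m ms Ω) :
    ∫ ω, √(X ω) ∂P =
      √((ms - 1) * Ω / m) * eulerBeta (m + 1 / 2) (ms - 1 / 2) / eulerBeta m ms := by
  rw [integral_comp_of_map_eq_fisherFMeasure hm hms hΩ hX continuous_sqrt.measurable
    (fun x _ => sqrt_eq_rpow x) (by linarith) (by linarith), sqrt_eq_rpow]

lemma integral_sqrt_comp_sq_of_map_eq_fisherFMeasure (hm : 0 < m) (hms : 1 < ms) (hΩ : 0 < Ω)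
    (hX : P.map X = fisherFMeasure m ms Ω) :
    ∫ ω, √(X ω) ^ 2 ∂P = (ms - 1) * Ω / m * eulerBeta (m + 1) (ms - 1) / eulerBeta m ms := by
  rw [integral_comp_of_map_eq_fisherFMeasure (p := 1) hm hms hΩ hX
    (continuous_sqrt.measurable.pow_const 2) (fun x hx => by simp [sq_sqrt (le_of_lt hx)]) (by linarith) hms, rpow_one]

end FisherFMeasure

lemma ProbabilityTheory.IndepFun.variance_mul {Ω : Type*} {mΩ : MeasurableSpace Ω}
    {μ : Measure Ω} [IsProbabilityMeasure μ] {U V : Ω → ℝ} (h : IndepFun U V μ)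
    (hU : MemLp U 2 μ) (hV : MemLp V 2 μ) :
    variance (fun ω => U ω * V ω) μ =
      (∫ ω, U ω ^ 2 ∂μ) * (∫ ω, V ω ^ 2 ∂μ) - ((∫ ω, U ω ∂μ) * ∫ ω, V ω ∂μ) ^ 2 := by
  have h_sq : IndepFun (fun ω => U ω ^ 2) (fun ω => V ω ^ 2) μ :=
    h.comp (measurable_id.pow_const 2) (measurable_id.pow_const 2)
  have hUV : MemLp (fun ω => U ω * V ω) 2 μ := by
    refine (memLp_two_iff_integrable_sq (f := fun ω => U ω * V ω) (hU.1.mul hV.1)).2 ?_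
    simp_rw [mul_pow]
    exact h_sq.integrable_mul hU.integrable_sq hV.integrable_sq
  rw [variance_eq_sub hUV]
  simp only [Pi.pow_apply, mul_pow]
  rw [h_sq.integral_fun_mul_eq_mul_integral hU.integrable_sq.1 hV.integrable_sq.1,
    h.integral_fun_mul_eq_mul_integral hU.1 hV.1]
  ring

theorem stmt5_general {α : Type*} {mα : MeasurableSpace α} (P : Measure α) [IsProbabilityMeasure P]
    (X Y : α → ℝ) (hXY : IndepFun X Y P)
    (m₁ m₂ ms₁ ms₂ Ω₁ Ω₂ : ℝ)
    (hm₁ : 0 < m₁) (hm₂ : 0 < m₂) (hms₁ : 1 < ms₁) (hms₂ : 1 < ms₂)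
    (hΩ₁ : 0 < Ω₁) (hΩ₂ : 0 < Ω₂)
    (hX : Measure.map X P
      = (volume.restrict (Ioi (0:ℝ))).withDensity
          (fun x => ENNReal.ofReal (fisherF m₁ ms₁ Ω₁ x)))
    (hY : Measure.map Y P
      = (volume.restrict (Ioi (0:ℝ))).withDensity
          (fun y => ENNReal.ofReal (fisherF m₂ ms₂ Ω₂ y))) :
    variance (fun ω => Real.sqrt (X ω) * Real.sqrt (Y ω)) P
      = ((ms₁ - 1) * (ms₂ - 1) * Ω₁ * Ω₂ /
          (m₁ * m₂ * eulerBeta m₁ ms₁ * eulerBeta m₂ ms₂)) *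
        (eulerBeta (m₁ + 1) (ms₁ - 1) * eulerBeta (m₂ + 1) (ms₂ - 1) -
          eulerBeta (m₁ + 1/2) (ms₁ - 1/2) ^ 2 * eulerBeta (m₂ + 1/2) (ms₂ - 1/2) ^ 2 /
            (eulerBeta m₁ ms₁ * eulerBeta m₂ ms₂)) := by
  have h_meas : Measurable sqrt := continuous_sqrt.measurable
  rw [IndepFun.variance_mul (U := fun ω => √(X ω)) (V := fun ω => √(Y ω))
      (hXY.comp h_meas h_meas) (memLp_two_sqrt_comp_of_map_eq_fisherFMeasure hm₁ hms₁ hΩ₁ hX)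
      (memLp_two_sqrt_comp_of_map_eq_fisherFMeasure hm₂ hms₂ hΩ₂ hY),
    integral_sqrt_comp_sq_of_map_eq_fisherFMeasure hm₁ hms₁ hΩ₁ hX,
    integral_sqrt_comp_sq_of_map_eq_fisherFMeasure hm₂ hms₂ hΩ₂ hY,
    integral_sqrt_comp_of_map_eq_fisherFMeasure hm₁ hms₁ hΩ₁ hX,
    integral_sqrt_comp_of_map_eq_fisherFMeasure hm₂ hms₂ hΩ₂ hY]
  have := sub_pos.2 hms₁
  have := sub_pos.2 hms₂
  have := eulerBeta_pos hm₁ (zero_lt_one.trans hms₁)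
  have := eulerBeta_pos hm₂ (zero_lt_one.trans hms₂)
  simp only [mul_pow, div_pow, sq_sqrt (by positivity : 0 ≤ (ms₁ - 1) * Ω₁ / m₁),
    sq_sqrt (by positivity : 0 ≤ (ms₂ - 1) * Ω₂ / m₂)]
  field_simp

/-- variance of the per-element cascaded channel amplitude W = √X·√Y with
independent Fisher-Snedecor F distributed X and Y (with the corrected sign). -/
theorem stmt5 {α : Type*} {mα : MeasurableSpace α} (P : Measure α) [IsProbabilityMeasure P]
    (X Y : α → ℝ) (hXY : IndepFun X Y P)
    (hX0 : ∀ᵐ ω ∂P, 0 ≤ X ω) (hY0 : ∀ᵐ ω ∂P, 0 ≤ Y ω)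
    (m₁ m₂ ms₁ ms₂ Ω₁ Ω₂ : ℝ)
    (hm₁ : 0 < m₁) (hm₂ : 0 < m₂) (hms₁ : 1 < ms₁) (hms₂ : 1 < ms₂)
    (hΩ₁ : 0 < Ω₁) (hΩ₂ : 0 < Ω₂)
    (hX : Measure.map X P
      = (volume.restrict (Ioi (0:ℝ))).withDensity
          (fun x => ENNReal.ofReal (fisherF m₁ ms₁ Ω₁ x)))
    (hY : Measure.map Y P
      = (volume.restrict (Ioi (0:ℝ))).withDensity
          (fun y => ENNReal.ofReal (fisherF m₂ ms₂ Ω₂ y))) :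
    variance (fun ω => Real.sqrt (X ω) * Real.sqrt (Y ω)) P
      = ((ms₁ - 1) * (ms₂ - 1) * Ω₁ * Ω₂ /
          (m₁ * m₂ * eulerBeta m₁ ms₁ * eulerBeta m₂ ms₂)) *
        (eulerBeta (m₁ + 1) (ms₁ - 1) * eulerBeta (m₂ + 1) (ms₂ - 1) -
          eulerBeta (m₁ + 1/2) (ms₁ - 1/2) ^ 2 * eulerBeta (m₂ + 1/2) (ms₂ - 1/2) ^ 2 /
            (eulerBeta m₁ ms₁ * eulerBeta m₂ ms₂)) :=
  stmt5_general (mα := mα) P X Y hXY m₁ m₂ ms₁ ms₂ Ω₁ Ω₂ hm₁ hm₂ hms₁ hms₂ hΩ₁ hΩ₂ hX hY
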